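/- arXiv:1307.6750 — 2 statements merged into one kernel-verified Lean document; each statement's English description precedes it below -/
import Mathlib

section
/- Let y, z ∈ EP₂ and suppose there exists g ∈ F such that g⁻¹ ∘ y ∘ g = z. Then there exist real numbers L and R such that y(t) = z(t) for all t ∈ (−∞, L] ∪ [R, +∞). -/
noncomputable section

open Filter Topology

/-- A real number is a dyadic rational. -/
def IsDyadic (x : ℝ) : Prop := ∃ m k : ℤ, x = (m : ℝ) * 2 ^ k

/-- `IsPL2 f` says that `f : ℝ → ℝ` is an orientation-preserving piecewise-linear
homeomorphism of the real line, with a discrete set of breakpoints (it is affine on a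
small interval on each side of every point), every breakpoint a dyadic rational, and
every slope an integer power of `2`. -/
def IsPL2 (f : ℝ → ℝ) : Prop :=
  Function.Bijective f ∧ StrictMono f ∧
    ∀ t : ℝ, ∃ (ε : ℝ) (a b : ℤ), 0 < ε ∧
      (∀ s : ℝ, t - ε ≤ s → s ≤ t → f s = f t + (2 : ℝ) ^ a * (s - t)) ∧
      (∀ s : ℝ, t ≤ s → s ≤ t + ε → f s = f t + (2 : ℝ) ^ b * (s - t)) ∧
      (a ≠ b → IsDyadic t)

/-- `EP₂`: elements of `PL₂(ℝ)` which are eventually periodic near `±∞`. -/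
def IsEP2 (f : ℝ → ℝ) : Prop :=
  IsPL2 f ∧ ∃ L R : ℝ, L ≤ R ∧ (∀ t : ℝ, t ≤ L → f (t - 1) = f t - 1) ∧
    (∀ t : ℝ, R ≤ t → f (t + 1) = f t + 1)

/-- Thompson's group `F`, realized inside `EP₂` as the maps which are eventually
integral translations near `±∞`. -/
def IsThompsonF (f : ℝ → ℝ) : Prop :=
  IsEP2 f ∧ ∃ (L R : ℝ) (mneg mpos : ℤ), L ≤ R ∧
    (∀ t : ℝ, t ≤ L → f t = t + (mneg : ℝ)) ∧ (∀ t : ℝ, R ≤ t → f t = t + (mpos : ℝ))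

/-!
Near `+∞` the conjugator `g ∈ F` is a translation `t ↦ t + m` by an integer `m`, and `y`, being
eventually periodic, commutes there with that translation; since `y` maps neighbourhoods of `+∞`
to neighbourhoods of `+∞`, `g⁻¹ (y (g t)) = g⁻¹ (y t + m) = g⁻¹ (g (y t)) = y t` for all large `t`.
The same argument works near `-∞`.
-/

lemma eventually_add_intCast_of_eventually_add_one {l : Filter ℝ}
    (hl : ∀ a : ℝ, Tendsto (· + a) l l) {f : ℝ → ℝ} (hf : ∀ᶠ t in l, f (t + 1) = f t + 1)
    (m : ℤ) : ∀ᶠ t in l, f (t + m) = f t + m := by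
  induction m using Int.induction_on with
  | zero => simp
  | succ i ih =>
    filter_upwards [ih, (hl i).eventually hf] with t hi hstep
    push_cast at hi ⊢
    rw [← add_assoc, hstep, hi, add_assoc]
  | pred i ih =>
    filter_upwards [ih, (hl (-i - 1)).eventually hf] with t hi hstep
    push_cast at hi hstep ⊢
    rw [show t + (-i - 1) + 1 = t + -i by ring, hi] at hstep
    linarith

lemma IsEP2.eventually_add_one_atTop {f : ℝ → ℝ} (hf : IsEP2 f) :
    ∀ᶠ t in atTop, f (t + 1) = f t + 1 := by
  obtain ⟨-, -, R, -, -, hR⟩ := hf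
  exact eventually_atTop.2 ⟨R, hR⟩

lemma IsEP2.eventually_add_one_atBot {f : ℝ → ℝ} (hf : IsEP2 f) :
    ∀ᶠ t in atBot, f (t + 1) = f t + 1 := by
  obtain ⟨-, L, -, -, hL, -⟩ := hf
  refine eventually_atBot.2 ⟨L - 1, fun t ht => ?_⟩
  have := hL (t + 1) (by linarith)
  rw [add_sub_cancel_right] at this
  linarith

lemma IsThompsonF.exists_eventually_eq_add_atTop {g : ℝ → ℝ} (hg : IsThompsonF g) :
    ∃ m : ℤ, ∀ᶠ t in atTop, g t = t + m := by
  obtain ⟨-, -, R, -, m, -, -, hR⟩ := hg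
  exact ⟨m, eventually_atTop.2 ⟨R, hR⟩⟩

lemma IsThompsonF.exists_eventually_eq_add_atBot {g : ℝ → ℝ} (hg : IsThompsonF g) :
    ∃ m : ℤ, ∀ᶠ t in atBot, g t = t + m := by
  obtain ⟨-, L, -, m, -, -, hL, -⟩ := hg
  exact ⟨m, eventually_atBot.2 ⟨L, hL⟩⟩

lemma IsPL2.tendsto_atTop {f : ℝ → ℝ} (hf : IsPL2 f) : Tendsto f atTop atTop :=
  tendsto_atTop_atTop_of_monotone hf.2.1.monotone fun b => (hf.1.2 b).imp fun _ h => h.ge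

lemma IsPL2.tendsto_atBot {f : ℝ → ℝ} (hf : IsPL2 f) : Tendsto f atBot atBot :=
  tendsto_atBot_atBot_of_monotone hf.2.1.monotone fun b => (hf.1.2 b).imp fun _ h => h.le

lemma Equiv.Perm.eventuallyEq_conj_of_eventually_eq_add {l : Filter ℝ} {y g : Equiv.Perm ℝ}
    {c : ℝ} (hyl : Tendsto y l l) (hg : ∀ᶠ t in l, g t = t + c)
    (hy : ∀ᶠ t in l, y (t + c) = y t + c) : ⇑(g⁻¹ * y * g) =ᶠ[l] y := by
  filter_upwards [hg, hy, hyl.eventually hg] with t hgt hyt hgyt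
  rw [Perm.mul_apply, Perm.mul_apply, hgt, hyt, Perm.inv_eq_iff_eq, hgyt]

theorem eq_near_infinity_of_conj_general (y z g : Equiv.Perm ℝ) (hy : IsEP2 ⇑y)
    (hg : IsThompsonF ⇑g) (hconj : g⁻¹ * y * g = z) :
    ∃ L R : ℝ, (∀ t : ℝ, t ≤ L → y t = z t) ∧ (∀ t : ℝ, R ≤ t → y t = z t) := by
  subst hconj
  obtain ⟨mneg, hgbot⟩ := hg.exists_eventually_eq_add_atBot
  obtain ⟨mpos, hgtop⟩ := hg.exists_eventually_eq_add_atTop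
  have hbot := Equiv.Perm.eventuallyEq_conj_of_eventually_eq_add hy.1.tendsto_atBot hgbot
    (eventually_add_intCast_of_eventually_add_one
      (fun a => tendsto_atBot_add_const_right _ a tendsto_id) hy.eventually_add_one_atBot mneg)
  have htop := Equiv.Perm.eventuallyEq_conj_of_eventually_eq_add hy.1.tendsto_atTop hgtop
    (eventually_add_intCast_of_eventually_add_one
      (fun a => tendsto_atTop_add_const_right _ a tendsto_id) hy.eventually_add_one_atTop mpos)
  obtain ⟨L, hL⟩ := eventually_atBot.1 hbot
  obtain ⟨R, hR⟩ := eventually_atTop.1 htop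
  exact ⟨L, R, fun t ht => (hL t ht).symm, fun t ht => (hR t ht).symm⟩

/-- **Statement 2.** If `y, z ∈ EP₂` are conjugate by an element `g` of Thompson's
group `F`, then `y` and `z` agree near `-∞` and near `+∞`. -/
theorem eq_near_infinity_of_conj (y z g : Equiv.Perm ℝ) (hy : IsEP2 ⇑y) (hz : IsEP2 ⇑z)
    (hg : IsThompsonF ⇑g) (hconj : g⁻¹ * y * g = z) :
    ∃ L R : ℝ, (∀ t : ℝ, t ≤ L → y t = z t) ∧ (∀ t : ℝ, R ≤ t → y t = z t) :=
  eq_near_infinity_of_conj_general y z g hy hg hconj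
end
end

section
/- Let y, z ∈ R·EP₂ satisfy y ∘ y = id, z ∘ z = id, and y(p) = p = z(p) for some rational number p. Then there exists g ∈ F with g⁻¹ ∘ y ∘ g = z if and only if there exist an integer u and a real number R₀ such that y⁻¹(z(t)) = t + u for all t ≥ R₀. -/
/-!
Conjugation by `g ∈ F` changes a map of `R·EP₂` near `+∞` only by the translation by `m₊ + m₋`,
where `g` translates by `m₊` near `+∞` and by `m₋` near `-∞`. Conversely, if `p` is dyadic, the map
that is the identity left of `p` and `y ∘ z` right of `p` conjugates `y` to `z`; its breakpoints
are dyadic because `z` preserves dyadic rationals, and it lies in `F` because `y ∘ z` is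
eventually a translation. If `p` is not dyadic, `y` and `z` are both the reflection in `p`.
-/

noncomputable section

open Filter Topology

/-- Orientation-reversing piecewise-linear homeomorphisms of `ℝ` with discrete breakpoint
set, dyadic breakpoints, and slopes the negatives of integer powers of `2`. -/
def IsRevPL2 (f : ℝ → ℝ) : Prop :=
  Function.Bijective f ∧ StrictAnti f ∧
    ∀ t : ℝ, ∃ (ε : ℝ) (a b : ℤ), 0 < ε ∧
      (∀ s : ℝ, t - ε ≤ s → s ≤ t → f s = f t - (2 : ℝ) ^ a * (s - t)) ∧
      (∀ s : ℝ, t ≤ s → s ≤ t + ε → f s = f t - (2 : ℝ) ^ b * (s - t)) ∧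
      (a ≠ b → IsDyadic t)

/-- `R·EP₂`: orientation-reversing eventually anti-periodic maps. -/
def IsREP2 (f : ℝ → ℝ) : Prop :=
  IsRevPL2 f ∧ ∃ L R : ℝ, L ≤ R ∧ (∀ t : ℝ, t ≤ L → f (t - 1) = f t + 1) ∧
    (∀ t : ℝ, R ≤ t → f (t + 1) = f t - 1)

open Set Function

namespace IsDyadic

lemma add {x y : ℝ} (hx : IsDyadic x) (hy : IsDyadic y) : IsDyadic (x + y) := by
  obtain ⟨m, k, rfl⟩ := hx
  obtain ⟨n, l, rfl⟩ := hy
  wlog hkl : k ≤ l generalizing m n k l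
  · simpa [add_comm] using this n l m k (by omega)
  obtain ⟨d, rfl⟩ : ∃ d : ℕ, l = k + d := ⟨(l - k).toNat, by omega⟩
  exact ⟨m + n * 2 ^ d, k, by rw [zpow_add₀ two_ne_zero, zpow_natCast]; push_cast; ring⟩

lemma neg {x : ℝ} (hx : IsDyadic x) : IsDyadic (-x) := by
  obtain ⟨m, k, rfl⟩ := hx
  exact ⟨-m, k, by push_cast; ring⟩

lemma sub {x y : ℝ} (hx : IsDyadic x) (hy : IsDyadic y) : IsDyadic (x - y) := by
  simpa [sub_eq_add_neg] using hx.add hy.neg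

lemma zpow_mul {x : ℝ} (hx : IsDyadic x) (j : ℤ) : IsDyadic (2 ^ j * x) := by
  obtain ⟨m, k, rfl⟩ := hx
  exact ⟨m, k + j, by rw [zpow_add₀ two_ne_zero]; ring⟩

end IsDyadic

lemma isDyadic_zpow_mul_iff {x : ℝ} (j : ℤ) : IsDyadic (2 ^ j * x) ↔ IsDyadic x := by
  refine ⟨fun h => ?_, fun h => h.zpow_mul j⟩
  have := h.zpow_mul (-j)
  rwa [← mul_assoc, ← zpow_add₀ two_ne_zero, neg_add_cancel, zpow_zero, one_mul] at this

lemma dense_setOf_isDyadic : Dense {x : ℝ | IsDyadic x} := by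
  refine dense_iff_exists_between.2 fun a b hab => ?_
  obtain ⟨n, hn⟩ := pow_unbounded_of_one_lt (b - a)⁻¹ one_lt_two
  have h2n : (0 : ℝ) < 2 ^ n := by positivity
  have hgap : 1 < 2 ^ n * (b - a) := by
    rwa [inv_lt_iff_one_lt_mul₀ (sub_pos.2 hab)] at hn
  refine ⟨(⌊a * 2 ^ n⌋ + 1 : ℤ) * 2 ^ (-(n : ℤ)), ⟨_, _, rfl⟩, ?_, ?_⟩
  · rw [zpow_neg, zpow_natCast, ← div_eq_mul_inv, lt_div_iff₀ h2n]
    exact_mod_cast Int.lt_floor_add_one (a * 2 ^ n)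
  · rw [zpow_neg, zpow_natCast, ← div_eq_mul_inv, div_lt_iff₀ h2n]
    have := Int.floor_le (a * 2 ^ n)
    push_cast
    linarith

lemma isDyadic_iff_of_affine {c s u x : ℝ} {k : ℤ} (hu : IsDyadic u)
    (hv : IsDyadic (c - 2 ^ k * (u - s))) : IsDyadic x ↔ IsDyadic (c - 2 ^ k * (x - s)) := by
  rw [show c - 2 ^ k * (x - s) = (c - 2 ^ k * (u - s)) - 2 ^ k * (x - u) by ring]
  refine ⟨fun hx => hv.sub ((hx.sub hu).zpow_mul k), fun h => ?_⟩
  have hxu := (isDyadic_zpow_mul_iff k).1 (by simpa using hv.sub h)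
  simpa using hxu.add hu

/-- The local condition of `IsPL2` at `t`, phrased with one-sided neighbourhood filters. -/
def IsPL2At (f : ℝ → ℝ) (t : ℝ) : Prop :=
  ∃ a b : ℤ, (f =ᶠ[𝓝[≤] t] fun x ↦ f t + 2 ^ a * (x - t)) ∧
    (f =ᶠ[𝓝[≥] t] fun x ↦ f t + 2 ^ b * (x - t)) ∧ (a ≠ b → IsDyadic t)

def IsRevPL2At (f : ℝ → ℝ) (t : ℝ) : Prop :=
  ∃ a b : ℤ, (f =ᶠ[𝓝[≤] t] fun x ↦ f t - 2 ^ a * (x - t)) ∧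
    (f =ᶠ[𝓝[≥] t] fun x ↦ f t - 2 ^ b * (x - t)) ∧ (a ≠ b → IsDyadic t)

lemma isPL2_of_isPL2At {f : ℝ → ℝ} (hb : Bijective f) (hm : StrictMono f)
    (h : ∀ t, IsPL2At f t) : IsPL2 f := by
  refine ⟨hb, hm, fun t => ?_⟩
  obtain ⟨a, b, hl, hr, hd⟩ := h t
  obtain ⟨l, hlt, hl⟩ := mem_nhdsLE_iff_exists_Icc_subset.1 hl
  obtain ⟨u, htu, hr⟩ := mem_nhdsGE_iff_exists_Icc_subset.1 hr
  refine ⟨min (t - l) (u - t), a, b, lt_min (by linarith) (by linarith), fun s h1 h2 => ?_,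
    fun s h1 h2 => ?_, hd⟩
  · exact hl ⟨by linarith [min_le_left (t - l) (u - t)], h2⟩
  · exact hr ⟨h1, by linarith [min_le_right (t - l) (u - t)]⟩

lemma IsRevPL2.isRevPL2At {f : ℝ → ℝ} (hf : IsRevPL2 f) (t : ℝ) : IsRevPL2At f t := by
  obtain ⟨ε, a, b, hε, hl, hr, hd⟩ := hf.2.2 t
  refine ⟨a, b, ?_, ?_, hd⟩
  · filter_upwards [Icc_mem_nhdsLE (sub_lt_self t hε)] with x hx using hl x hx.1 hx.2
  · filter_upwards [Icc_mem_nhdsGE (lt_add_of_pos_right t hε)] with x hx using hr x hx.1 hx.2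

lemma isPL2At_id (t : ℝ) : IsPL2At id t :=
  ⟨0, 0, .of_forall fun x => by simp, .of_forall fun x => by simp, fun h => absurd rfl h⟩

lemma IsPL2At.congr {f g : ℝ → ℝ} {t : ℝ} (h : IsPL2At f t) (hfg : f =ᶠ[𝓝 t] g) :
    IsPL2At g t := by
  obtain ⟨a, b, hl, hr, hd⟩ := h
  refine ⟨a, b, ?_, ?_, hd⟩ <;> rw [← hfg.eq_of_nhds]
  exacts [(hfg.filter_mono nhdsWithin_le_nhds).symm.trans hl,
    (hfg.filter_mono nhdsWithin_le_nhds).symm.trans hr]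

lemma isPL2At_of_eqOn_Iic_of_eqOn_Ici {g f₁ f₂ : ℝ → ℝ} {p : ℝ} (hp : IsDyadic p)
    (h₁ : ∀ t ≤ p, IsPL2At f₁ t) (h₂ : ∀ t ≥ p, IsPL2At f₂ t) (hg₁ : EqOn g f₁ (Iic p))
    (hg₂ : EqOn g f₂ (Ici p)) (t : ℝ) : IsPL2At g t := by
  rcases lt_trichotomy t p with htp | rfl | htp
  · exact (h₁ t htp.le).congr (hg₁.eventuallyEq_of_mem (Iic_mem_nhds htp)).symm
  · obtain ⟨a, -, hl, -⟩ := h₁ t le_rfl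
    obtain ⟨-, b, -, hr, -⟩ := h₂ t le_rfl
    refine ⟨a, b, ?_, ?_, fun _ => hp⟩
    · rw [hg₁ (mem_Iic.2 le_rfl)]
      exact hg₁.eventuallyEq_nhdsWithin.trans hl
    · rw [hg₂ (mem_Ici.2 le_rfl)]
      exact hg₂.eventuallyEq_nhdsWithin.trans hr
  · exact (h₂ t htp.le).congr (hg₂.eventuallyEq_of_mem (Ici_mem_nhds htp)).symm

lemma Filter.EventuallyEq.comp_affine {f g : ℝ → ℝ} {l l' : Filter ℝ} {s : ℝ} {a b : ℤ}
    (hg : g =ᶠ[l] fun x ↦ g s - 2 ^ b * (x - s)) (hgl : Tendsto g l l')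
    (hf : f =ᶠ[l'] fun y ↦ f (g s) - 2 ^ a * (y - g s)) :
    f ∘ g =ᶠ[l] fun x ↦ f (g s) + 2 ^ (a + b) * (x - s) := by
  filter_upwards [hg, hgl.eventually hf] with x hgx hfx
  rw [comp_apply, hfx, hgx, zpow_add₀ two_ne_zero]
  ring

lemma IsRevPL2.continuous {f : ℝ → ℝ} (hf : IsRevPL2 f) : Continuous f := by
  have hneg : Surjective fun x => -f x := fun y => (hf.1.2 (-y)).imp fun x hx => by simp [hx]
  simpa only [neg_neg] using (hf.2.1.antitone.neg.continuous_of_surjective hneg).fun_neg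

lemma IsRevPL2.tendsto_nhdsLE {f : ℝ → ℝ} (hf : IsRevPL2 f) (t : ℝ) :
    Tendsto f (𝓝[≤] t) (𝓝[≥] f t) :=
  hf.continuous.continuousWithinAt.tendsto_nhdsWithin fun _ hx => hf.2.1.antitone hx

lemma IsRevPL2.tendsto_nhdsGE {f : ℝ → ℝ} (hf : IsRevPL2 f) (t : ℝ) :
    Tendsto f (𝓝[≥] t) (𝓝[≤] f t) :=
  hf.continuous.continuousWithinAt.tendsto_nhdsWithin fun _ hx => hf.2.1.antitone hx

lemma IsRevPL2.isPL2At_comp {y z : ℝ → ℝ} (hy : IsRevPL2 y) (hz : IsRevPL2 z) {t : ℝ}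
    (hzt : IsDyadic (z t) → IsDyadic t) : IsPL2At (y ∘ z) t := by
  obtain ⟨az, bz, hzl, hzr, hdz⟩ := hz.isRevPL2At t
  obtain ⟨ay, by', hyl, hyr, hdy⟩ := hy.isRevPL2At (z t)
  refine ⟨by' + az, ay + bz, hzl.comp_affine (hz.tendsto_nhdsLE t) hyr,
    hzr.comp_affine (hz.tendsto_nhdsGE t) hyl, fun hab => ?_⟩
  by_cases haz : az = bz
  · exact hzt (hdy fun h => hab (by omega))
  · exact hdz haz

lemma frequently_ne_nhdsLE (s : ℝ) : ∃ᶠ x in 𝓝[≤] s, x ≠ s :=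
  (eventually_nhdsWithin_of_forall (s := Iio s) fun _ hx => ne_of_lt hx).frequently.filter_mono
    (nhdsWithin_mono s Iio_subset_Iic_self)

lemma frequently_ne_nhdsGE (s : ℝ) : ∃ᶠ x in 𝓝[≥] s, x ≠ s :=
  (eventually_nhdsWithin_of_forall (s := Ioi s) fun _ hx => ne_of_gt hx).frequently.filter_mono
    (nhdsWithin_mono s Ioi_subset_Ici_self)

lemma Function.Involutive.zpow_add_eq_zero {f : ℝ → ℝ} (hinv : Involutive f) {l l' : Filter ℝ}
    {s : ℝ} {a b : ℤ} (hne : ∃ᶠ x in l, x ≠ s) (hfl : Tendsto f l l')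
    (h₁ : f =ᶠ[l] fun x ↦ f s - 2 ^ b * (x - s))
    (h₂ : f =ᶠ[l'] fun y ↦ f (f s) - 2 ^ a * (y - f s)) : a + b = 0 := by
  obtain ⟨x, hx, hxs⟩ := ((h₁.comp_affine hfl h₂).and_frequently hne).exists
  rw [comp_apply, hinv, hinv] at hx
  have : (2 : ℝ) ^ (a + b) = 1 := by
    have : (x - s) * (2 ^ (a + b) - 1) = 0 := by linarith
    simpa [sub_ne_zero.2 hxs, sub_eq_zero] using this
  exact (zpow_eq_one_iff_right₀ zero_le_two (by norm_num)).1 this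

/-- `f s` is again a breakpoint: the slopes at `f s` are the reciprocals of those at `s`. -/
lemma IsRevPL2.isDyadic_apply_of_ne {f : ℝ → ℝ} (hf : IsRevPL2 f) (hinv : Involutive f) {s : ℝ}
    {a b : ℤ} (hl : f =ᶠ[𝓝[≤] s] fun x ↦ f s - 2 ^ a * (x - s))
    (hr : f =ᶠ[𝓝[≥] s] fun x ↦ f s - 2 ^ b * (x - s)) (hab : a ≠ b) : IsDyadic (f s) := by
  obtain ⟨a', b', hl', hr', hd⟩ := hf.isRevPL2At (f s)
  have h₁ := hinv.zpow_add_eq_zero (frequently_ne_nhdsGE s) (hf.tendsto_nhdsGE s) hr hl'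
  have h₂ := hinv.zpow_add_eq_zero (frequently_ne_nhdsLE s) (hf.tendsto_nhdsLE s) hl hr'
  exact hd (by omega)

lemma PreconnectedSpace.forall_of_eventually_nhds {X : Type*} [TopologicalSpace X]
    [PreconnectedSpace X] {P : X → Prop} {p : X} (hp : ∀ᶠ x in 𝓝 p, P x)
    (hstep : ∀ s, (∃ᶠ x in 𝓝[≠] s, ∀ᶠ y in 𝓝 x, P y) → ∀ᶠ x in 𝓝 s, P x) (x : X) : P x := by
  set S := {s | ∀ᶠ x in 𝓝 s, P x}
  have hS : IsClosed S := isClosed_iff_frequently.2 fun s hs => by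
    by_cases hsS : s ∈ S
    · exact hsS
    · exact hstep s (frequently_nhdsWithin_iff.2 (hs.mono fun y hy => ⟨hy, fun h => hsS (h ▸ hy)⟩))
  have hSu := IsClopen.eq_univ ⟨hS, isOpen_setOfPred_eventually_nhds⟩ ⟨p, hp⟩
  exact (hSu ▸ mem_univ x : x ∈ S).self_of_nhds

lemma eventually_nhds_of_nhdsLE_of_nhdsGE {P : ℝ → Prop} {s : ℝ} (hl : ∀ᶠ x in 𝓝[≤] s, P x)
    (hr : ∀ᶠ x in 𝓝[≥] s, P x) : ∀ᶠ x in 𝓝 s, P x :=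
  nhdsLE_sup_nhdsGE s ▸ eventually_sup.2 ⟨hl, hr⟩

lemma Filter.Eventually.eventually_nhds_of_isOpen {P : ℝ → Prop} {s : ℝ} {t : Set ℝ}
    (ht : IsOpen t) (h : ∀ᶠ x in 𝓝[t] s, P x) : ∀ᶠ y in 𝓝[t] s, ∀ᶠ x in 𝓝 y, P x := by
  filter_upwards [eventually_eventually_nhdsWithin.2 h, self_mem_nhdsWithin] with y hy hyt
  rwa [ht.nhdsWithin_eq hyt] at hy

lemma exists_eventuallyEq_nhds_of_frequently {f : ℝ → ℝ} {g : ℤ → ℝ → ℝ} {Q : ℝ → Prop}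
    {s : ℝ} {a b : ℤ} (hQ : ∃ᶠ x in 𝓝[≠] s, Q x) (hl : f =ᶠ[𝓝[≤] s] g a)
    (hr : f =ᶠ[𝓝[≥] s] g b) : ∃ k, (k = a ∨ k = b) ∧ ∃ x, Q x ∧ f =ᶠ[𝓝 x] g k := by
  rw [← nhdsLT_sup_nhdsGT, frequently_sup] at hQ
  rcases hQ with hQ | hQ
  · have hl' := (hl.filter_mono (nhdsWithin_mono s Iio_subset_Iic_self)).eventually_nhds_of_isOpen
      isOpen_Iio
    exact ⟨a, .inl rfl, (hQ.and_eventually hl').exists⟩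
  · have hr' := (hr.filter_mono (nhdsWithin_mono s Ioi_subset_Ici_self)).eventually_nhds_of_isOpen
      isOpen_Ioi
    exact ⟨b, .inr rfl, (hQ.and_eventually hr').exists⟩

lemma eq_and_eq_of_eventually_affine_eq {x c₁ c₂ m₁ m₂ : ℝ}
    (h : ∀ᶠ w in 𝓝 x, c₁ + m₁ * w = c₂ + m₂ * w) : c₁ = c₂ ∧ m₁ = m₂ := by
  obtain ⟨w, hw, hwx⟩ := ((h.filter_mono nhdsWithin_le_nhds).and
    (self_mem_nhdsWithin : ∀ᶠ w in 𝓝[≠] x, w ≠ x)).exists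
  have hx := h.self_of_nhds
  have hm : m₁ = m₂ := by
    have : (m₁ - m₂) * (w - x) = 0 := by linarith
    simpa [sub_ne_zero.2 hwx, sub_eq_zero] using this
  exact ⟨by subst hm; linarith, hm⟩

/-- An involution of `R·PL₂` fixing a non-dyadic point `p` is the reflection in `p`: near the
first breakpoint of `f` away from `p` the map would still be the reflection, so the breakpoint
`s` and its image `2 * p - s` would both be dyadic, and then so would be `p`. -/
lemma IsRevPL2.eq_two_mul_sub {f : ℝ → ℝ} (hf : IsRevPL2 f) (hinv : Involutive f) {p : ℝ}
    (hfp : f p = p) (hp : ¬ IsDyadic p) (x : ℝ) : f x = 2 * p - x := by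
  refine PreconnectedSpace.forall_of_eventually_nhds (P := fun x => f x = 2 * p - x) (p := p)
    ?_ (fun s hs => ?_) x
  · obtain ⟨a, b, hl, hr, hab⟩ := hf.isRevPL2At p
    obtain rfl : a = b := not_not.1 (mt hab hp)
    have : a + a = 0 := hinv.zpow_add_eq_zero (frequently_ne_nhdsGE p) (hf.tendsto_nhdsGE p) hr
      (by rw [hfp]; exact hl)
    obtain rfl : a = 0 := by omega
    refine eventually_nhds_of_nhdsLE_of_nhdsGE (hl.mono fun x hx => ?_) (hr.mono fun x hx => ?_)
      <;> rw [hx, hfp, zpow_zero] <;> ring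
  · obtain ⟨a, b, hl, hr, hab⟩ := hf.isRevPL2At s
    obtain ⟨k, hk, x, hPx, hx⟩ :=
      exists_eventuallyEq_nhds_of_frequently (g := fun k x ↦ f s - 2 ^ k * (x - s)) hs hl hr
    obtain ⟨hfs, hk1⟩ := eq_and_eq_of_eventually_affine_eq (c₁ := f s + 2 ^ k * s)
      (m₁ := - 2 ^ k) (c₂ := 2 * p) (m₂ := -1) <| (hx.symm.trans hPx).mono fun w hw => by
        simp only at hw; linarith
    replace hfs : f s = 2 * p - s := by rw [neg_inj.1 hk1] at hfs; linarith
    replace hk1 : (2 : ℝ) ^ k = 1 := neg_inj.1 hk1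
    obtain rfl : a = b := by
      by_contra hab'
      refine hp ?_
      have hsum := (hab hab').add (hf.isDyadic_apply_of_ne hinv hl hr hab')
      rw [hfs] at hsum
      simpa [← mul_assoc, ← zpow_add₀] using hsum.zpow_mul (-1)
    obtain rfl : k = a := hk.elim id id
    refine eventually_nhds_of_nhdsLE_of_nhdsGE (hl.mono fun x hx => ?_) (hr.mono fun x hx => ?_)
      <;> rw [hx, hfs, hk1] <;> ring

/-- A map of `R·PL₂` sending one dyadic point to a dyadic point preserves dyadicity: on each
affine piece this holds as soon as the piece contains a dyadic point with dyadic image. -/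
lemma IsRevPL2.isDyadic_iff {f : ℝ → ℝ} (hf : IsRevPL2 f) {p : ℝ} (hp : IsDyadic p)
    (hfp : IsDyadic (f p)) (x : ℝ) : IsDyadic x ↔ IsDyadic (f x) := by
  have near_dyadic (s : ℝ) (hs : IsDyadic s) (hfs : IsDyadic (f s)) :
      ∀ᶠ x in 𝓝 s, IsDyadic x ↔ IsDyadic (f x) := by
    obtain ⟨a, b, hl, hr, -⟩ := hf.isRevPL2At s
    refine eventually_nhds_of_nhdsLE_of_nhdsGE (hl.mono fun x hx => ?_) (hr.mono fun x hx => ?_)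
      <;> rw [hx] <;> exact isDyadic_iff_of_affine hs (by simpa using hfs)
  refine PreconnectedSpace.forall_of_eventually_nhds (near_dyadic p hp hfp) (fun s hs => ?_) x
  obtain ⟨a, b, hl, hr, hab⟩ := hf.isRevPL2At s
  obtain ⟨k, hk, x, hPx, hx⟩ :=
    exists_eventuallyEq_nhds_of_frequently (g := fun k x ↦ f s - 2 ^ k * (x - s)) hs hl hr
  obtain ⟨x₀, hx₀, hfx₀, hPx₀⟩ :=
    ((mem_closure_iff_frequently.1 (dense_setOf_isDyadic.closure_eq ▸ mem_univ x)).and_eventually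
      (hx.and hPx)).exists
  have hv : IsDyadic (f s - 2 ^ k * (x₀ - s)) := by
    simpa only [hfx₀] using hPx₀.1 hx₀
  by_cases hs : IsDyadic s
  · exact near_dyadic s hs (by simpa using (isDyadic_iff_of_affine hx₀ hv).1 hs)
  · obtain rfl : a = b := not_not.1 (mt hab hs)
    obtain rfl : k = a := hk.elim id id
    refine (eventually_nhds_of_nhdsLE_of_nhdsGE hl hr).mono fun y hy => ?_
    rw [hy]
    exact isDyadic_iff_of_affine hx₀ hv

lemma IsRevPL2.tendsto_atTop_atBot {f : ℝ → ℝ} (hf : IsRevPL2 f) : Tendsto f atTop atBot :=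
  tendsto_atTop_atBot_of_antitone hf.2.1.antitone fun b => (hf.1.2 b).imp fun _ h => h.le

lemma IsREP2.eventually_apply_add_intCast {f : ℝ → ℝ} (hf : IsREP2 f) (m : ℤ) :
    ∀ᶠ t in atTop, f (t + m) = f t - m := by
  obtain ⟨-, -, R, -, -, hR⟩ := hf
  have hnat (n : ℕ) : ∀ t, R ≤ t → f (t + n) = f t - n := by
    induction n with
    | zero => simp
    | succ n ih =>
      intro t ht
      push_cast
      rw [← add_assoc, hR _ (by linarith [n.cast_nonneg (α := ℝ)]), ih t ht]
      ring
  obtain ⟨n, rfl | rfl⟩ := Int.eq_nat_or_neg m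
  · exact eventually_atTop.2 ⟨R, fun t ht => by simpa using hnat n t ht⟩
  · refine eventually_atTop.2 ⟨R + n, fun t ht => ?_⟩
    have := hnat n (t - n) (by linarith)
    rw [sub_add_cancel] at this
    rw [Int.cast_neg, Int.cast_natCast, ← sub_eq_add_neg]
    linarith

lemma IsREP2.exists_inv_apply_conj_eq_add {y g : Equiv.Perm ℝ} (hy : IsREP2 y)
    (hg : IsThompsonF g) :
    ∃ (u : ℤ) (R₀ : ℝ), ∀ t, R₀ ≤ t → y⁻¹ ((g⁻¹ * y * g) t) = t + u := by
  obtain ⟨-, L, R, mneg, mpos, -, hL, hR⟩ := hg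
  have hginv (s : ℝ) (hs : s ≤ L + mneg) : g⁻¹ s = s - mneg := by
    rw [Equiv.Perm.inv_eq_iff_eq, hL _ (by linarith)]
    ring
  refine ⟨mpos + mneg, eventually_atTop.1 ?_⟩
  filter_upwards [eventually_ge_atTop R, hy.eventually_apply_add_intCast mpos,
    hy.eventually_apply_add_intCast (mpos + mneg),
    hy.1.tendsto_atTop_atBot.eventually (eventually_le_atBot (L + mneg + mpos))]
    with t htR h₁ h₂ h₃
  rw [Equiv.Perm.mul_apply, Equiv.Perm.mul_apply, hR t htR, h₁, hginv _ (by linarith),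
    Equiv.Perm.inv_eq_iff_eq, h₂]
  push_cast
  ring

lemma IsPL2.isThompsonF {f : ℝ → ℝ} (hf : IsPL2 f) {L R : ℝ} {mneg mpos : ℤ}
    (hL : ∀ t ≤ L, f t = t + mneg) (hR : ∀ t, R ≤ t → f t = t + mpos) : IsThompsonF f := by
  refine ⟨⟨hf, min L R, max L R, min_le_max, fun t ht => ?_, fun t ht => ?_⟩,
    min L R, max L R, mneg, mpos, min_le_max, fun t ht => hL t (ht.trans (min_le_left L R)),
    fun t ht => hR t ((le_max_right L R).trans ht)⟩
  · have := min_le_left L R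
    rw [hL t (by linarith), hL (t - 1) (by linarith)]
    ring
  · have := le_max_right L R
    rw [hR t (by linarith), hR (t + 1) (by linarith)]
    ring

lemma isThompsonF_id : IsThompsonF id :=
  (isPL2_of_isPL2At bijective_id strictMono_id isPL2At_id).isThompsonF (L := 0) (R := 0)
    (mneg := 0) (mpos := 0) (fun t _ => by simp) (fun t _ => by simp)

lemma exists_isThompsonF_conj_of_isDyadic {y z : Equiv.Perm ℝ} (hy : IsRevPL2 y)
    (hz : IsRevPL2 z) (hyi : Involutive y) (hzi : Involutive z) {p : ℝ} (hp : IsDyadic p)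
    (hyp : y p = p) (hzp : z p = p) {u : ℤ} {R₀ : ℝ} (hu : ∀ t, R₀ ≤ t → y (z t) = t + u) :
    ∃ g : Equiv.Perm ℝ, IsThompsonF g ∧ g⁻¹ * y * g = z := by
  have hyz : StrictMono (y ∘ z) := hy.2.1.comp hz.2.1
  have hmaps (t : ℝ) : p < (y * z) t ↔ p < t := by
    simpa [hyp, hzp] using hyz.lt_iff_lt (a := p) (b := t)
  set g := Equiv.Perm.ofSubtype ((y * z).subtypePerm hmaps)
  have hg₁ : EqOn g id (Iic p) := fun t ht =>
    Equiv.Perm.ofSubtype_apply_of_not_mem _ (not_lt.2 ht)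
  have hg₂ : EqOn g (y ∘ z) (Ici p) := by
    intro t ht
    rcases (mem_Ici.1 ht).eq_or_lt with rfl | ht
    · simp [hg₁ (mem_Iic.2 le_rfl), hzp, hyp]
    · simp [g, Equiv.Perm.ofSubtype_apply_of_mem _ ht]
  have hzp_le {t : ℝ} (ht : t ≤ p) : p ≤ z t := hzp ▸ hz.2.1.antitone ht
  have hzp_ge {t : ℝ} (ht : p ≤ t) : z t ≤ p := hzp ▸ hz.2.1.antitone ht
  refine ⟨g, ?_, ?_⟩
  · have hzd (t : ℝ) : IsDyadic (z t) → IsDyadic t := (hz.isDyadic_iff hp (by rwa [hzp]) t).2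
    have hmono : StrictMono g := StrictMonoOn.Iic_union_Ici
      ((strictMono_id.strictMonoOn _).congr hg₁.symm) ((hyz.strictMonoOn _).congr hg₂.symm)
    refine (isPL2_of_isPL2At g.bijective hmono (isPL2At_of_eqOn_Iic_of_eqOn_Ici hp
      (fun t _ => isPL2At_id t) (fun t _ => hy.isPL2At_comp hz (hzd t)) hg₁ hg₂)).isThompsonF
      (L := p) (mneg := 0) (R := max p R₀) (mpos := u) (fun t ht => by simp [hg₁ ht]) ?_
    intro t ht
    rw [hg₂ (le_of_max_le_left ht), comp_apply, hu t (le_of_max_le_right ht)]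
  · rw [mul_assoc, inv_mul_eq_iff_eq_mul]
    ext t
    simp only [Equiv.Perm.mul_apply]
    rcases le_total t p with ht | ht
    · rw [hg₁ ht, hg₂ (hzp_le ht), comp_apply, hzi]
      rfl
    · rw [hg₂ ht, comp_apply, hyi, hg₁ (hzp_ge ht)]
      rfl

lemma Equiv.Perm.involutive_of_mul_self_eq_one {α : Type*} {f : Equiv.Perm α} (h : f * f = 1) :
    Involutive f :=
  fun x => by simpa using DFunLike.congr_fun h x

/-- **Statement 7.** Let `y, z ∈ R·EP₂` be involutions fixing a common rational point
`p`. Then `y` and `z` are conjugate by an element of `F` if and only if `y⁻¹ ∘ z` is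
eventually (for large `t`) an integral translation. -/
theorem orientation_reversing_involutions_conj (y z : Equiv.Perm ℝ)
    (hy : IsREP2 ⇑y) (hz : IsREP2 ⇑z)
    (hy2 : y * y = 1) (hz2 : z * z = 1)
    (p : ℚ) (hyp : y (p : ℝ) = (p : ℝ)) (hzp : z (p : ℝ) = (p : ℝ)) :
    (∃ g : Equiv.Perm ℝ, IsThompsonF ⇑g ∧ g⁻¹ * y * g = z) ↔
      ∃ (u : ℤ) (R₀ : ℝ), ∀ t : ℝ, R₀ ≤ t → y⁻¹ (z t) = t + (u : ℝ) := by
  have hyi := Equiv.Perm.involutive_of_mul_self_eq_one hy2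
  have hzi := Equiv.Perm.involutive_of_mul_self_eq_one hz2
  constructor
  · rintro ⟨g, hg, rfl⟩
    exact hy.exists_inv_apply_conj_eq_add hg
  · rintro ⟨u, R₀, hu⟩
    rw [inv_eq_of_mul_eq_one_left hy2] at hu
    by_cases hp : IsDyadic (p : ℝ)
    · exact exists_isThompsonF_conj_of_isDyadic hy.1 hz.1 hyi hzi hp hyp hzp hu
    · have hyz : y = z := Equiv.ext fun x => by
        rw [hy.1.eq_two_mul_sub hyi hyp hp, hz.1.eq_two_mul_sub hzi hzp hp]
      exact ⟨1, isThompsonF_id, by simp [hyz]⟩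
end
end
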